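/- arXiv:2106.02404 — 5 statements merged into one kernel-verified Lean document; each statement's English description precedes it below -/
import Mathlib

section
/- Let X and E be real Banach spaces, let p ∈ X, let f : X → ℝ and g : X → E be maps that are continuously (Fréchet) differentiable on a neighborhood of p, with g(p) = 0 and with the derivative Dg(p) : X → E a surjective continuous linear map. Then the restriction of Df(p) to the kernel of Dg(p) is zero (i.e., p is a critical point of f restricted to the level set g⁻¹(0), whose tangent space at p is ker Dg(p)) if and only if there exists a continuous linear functional Λ ∈ E* such that Df(p) + Λ ∘ Dg(p) = 0 (i.e., p is a critical point of f + Λ ∘ g). -/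
/-!
If `φ = Df(p)` vanishes on the kernel of the surjection `T = Dg(p)`, it factors linearly as
`Λ ∘ T`; by the open mapping theorem `T` is a quotient map, so `Λ` is continuous, and `-Λ` is
the multiplier.
-/

open Function

theorem LinearMap.exists_comp_eq_of_ker_le {R M N P : Type*} [Ring R]
    [AddCommGroup M] [Module R M] [AddCommGroup N] [Module R N] [AddCommGroup P] [Module R P]
    (T : M →ₗ[R] N) (hT : Surjective T) (φ : M →ₗ[R] P) (h : ker T ≤ ker φ) :
    ∃ Λ : N →ₗ[R] P, Λ ∘ₗ T = φ :=
  ⟨(ker T).liftQ φ h ∘ₗ (T.quotKerEquivOfSurjective hT).symm.toLinearMap, by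
    ext x
    simp⟩

namespace ContinuousLinearMap

variable {𝕜 E F G : Type*} [NontriviallyNormedField 𝕜]
  [NormedAddCommGroup E] [NormedSpace 𝕜 E] [CompleteSpace E]
  [NormedAddCommGroup F] [NormedSpace 𝕜 F] [CompleteSpace F]
  [AddCommGroup G] [Module 𝕜 G] [TopologicalSpace G]

theorem exists_comp_eq_of_ker_le (T : E →L[𝕜] F) (hT : Surjective T) (φ : E →L[𝕜] G)
    (h : T.ker ≤ φ.ker) : ∃ Λ : F →L[𝕜] G, Λ ∘L T = φ := by
  obtain ⟨Λ, hΛ⟩ := (T : E →ₗ[𝕜] F).exists_comp_eq_of_ker_le hT (φ : E →ₗ[𝕜] G) h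
  have hcont : Continuous Λ := by
    rw [(T.isQuotientMap hT).continuous_iff]
    change Continuous (Λ ∘ₗ (T : E →ₗ[𝕜] F))
    rw [hΛ]
    exact φ.continuous
  exact ⟨⟨Λ, hcont⟩, coe_injective hΛ⟩

theorem ker_le_ker_iff_exists_add_comp_eq_zero [IsTopologicalAddGroup G]
    (T : E →L[𝕜] F) (hT : Surjective T) (φ : E →L[𝕜] G) :
    T.ker ≤ φ.ker ↔ ∃ Λ : F →L[𝕜] G, φ + Λ ∘L T = 0 := by
  constructor
  · intro h
    obtain ⟨Λ, hΛ⟩ := T.exists_comp_eq_of_ker_le hT φ h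
    exact ⟨-Λ, by rw [neg_comp, hΛ, add_neg_cancel]⟩
  · rintro ⟨Λ, hΛ⟩ x (hx : T x = 0)
    simpa [hx] using congr($hΛ x)

end ContinuousLinearMap

theorem lagrange_multiplier_banach_general {X E : Type*}
    [NormedAddCommGroup X] [NormedSpace ℝ X] [CompleteSpace X]
    [NormedAddCommGroup E] [NormedSpace ℝ E] [CompleteSpace E]
    (p : X) (f : X → ℝ) (g : X → E)
    (hsurj : Function.Surjective (fderiv ℝ g p)) :
    (∀ x : X, fderiv ℝ g p x = 0 → fderiv ℝ f p x = 0) ↔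
      ∃ Λ : E →L[ℝ] ℝ, fderiv ℝ f p + Λ.comp (fderiv ℝ g p) = 0 :=
  (fderiv ℝ g p).ker_le_ker_iff_exists_add_comp_eq_zero hsurj (fderiv ℝ f p)

/-- Lagrange multiplier theorem in Banach spaces: if `g : X → E` is `C¹` near `p` with
`g p = 0` and surjective derivative, and `f : X → ℝ` is `C¹` near `p`, then `Df(p)`
vanishes on `ker Dg(p)` (criticality of `f` restricted to `g⁻¹(0)`) if and only if
there is a continuous linear functional `Λ ∈ E*` with `Df(p) + Λ ∘ Dg(p) = 0`. -/
theorem lagrange_multiplier_banach {X E : Type*}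
    [NormedAddCommGroup X] [NormedSpace ℝ X] [CompleteSpace X]
    [NormedAddCommGroup E] [NormedSpace ℝ E] [CompleteSpace E]
    (p : X) (f : X → ℝ) (g : X → E)
    (U : Set X) (hU : U ∈ nhds p)
    (hf : ContDiffOn ℝ 1 f U) (hg : ContDiffOn ℝ 1 g U)
    (hgp : g p = 0)
    (hsurj : Function.Surjective (fderiv ℝ g p)) :
    (∀ x : X, fderiv ℝ g p x = 0 → fderiv ℝ f p x = 0) ↔
      ∃ Λ : E →L[ℝ] ℝ, fderiv ℝ f p + Λ.comp (fderiv ℝ g p) = 0 :=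
  lagrange_multiplier_banach_general p f g hsurj
end

section
/- Let L : ℝⁿ × ℝⁿ × ℝ → ℝ be C², let (c, c_z) : [0,1] → ℝⁿ × ℝ be C² with c_z'(t) = L(c(t), c'(t), c_z(t)) for all t, and let λ : [0,1] → ℝ be C¹ with λ(1) = 1. Suppose that along (c(t), c'(t), c_z(t)): (i) for each i, d/dt[λ(t) ∂L/∂q̇ⁱ] − λ(t) ∂L/∂qⁱ = 0, and (ii) λ'(t) = −λ(t) ∂L/∂z. Then λ(t) > 0 for all t ∈ [0,1], and the pair (c, c_z) satisfies the Herglotz equations: for each i, d/dt[∂L/∂q̇ⁱ] − ∂L/∂qⁱ = (∂L/∂q̇ⁱ)(∂L/∂z) along (c(t), c'(t), c_z(t)). Conversely, if (c, c_z) satisfies the Herglotz equations, then λ(t) := exp(∫_t¹ ∂L/∂z(c(s), c'(s), c_z(s)) ds) satisfies (i), (ii) and λ(1) = 1. -/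
/-!
Along the curve write `Z(t) = ∂L/∂z`. Equation (ii) is the linear ODE `λ' = -λ Z`, whose solution with
`λ(1) = 1` is `λ(t) = exp (∫_t¹ Z)`, hence positive. For any such integrating factor `λ ≠ 0`, the
product rule turns `(λ P)' = λ Q` into `P' = Q + P Z`; with `P = ∂L/∂q̇ⁱ`, `Q = ∂L/∂qⁱ` this is
exactly the passage between (i) and the Herglotz equations, in both directions.
-/

open Set

/-- Partial derivative of `L(q, q̇, z)` with respect to `qⁱ`. -/
noncomputable def pdQ {n : ℕ} (L : (Fin n → ℝ) × (Fin n → ℝ) × ℝ → ℝ) (i : Fin n)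
    (p : (Fin n → ℝ) × (Fin n → ℝ) × ℝ) : ℝ :=
  fderiv ℝ L p (Pi.single i 1, 0, 0)

/-- Partial derivative of `L(q, q̇, z)` with respect to `q̇ⁱ`. -/
noncomputable def pdQdot {n : ℕ} (L : (Fin n → ℝ) × (Fin n → ℝ) × ℝ → ℝ) (i : Fin n)
    (p : (Fin n → ℝ) × (Fin n → ℝ) × ℝ) : ℝ :=
  fderiv ℝ L p (0, Pi.single i 1, 0)

/-- Partial derivative of `L(q, q̇, z)` with respect to `z`. -/
noncomputable def pdZ {n : ℕ} (L : (Fin n → ℝ) × (Fin n → ℝ) × ℝ → ℝ)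
    (p : (Fin n → ℝ) × (Fin n → ℝ) × ℝ) : ℝ :=
  fderiv ℝ L p (0, 0, 1)

/-- The lifted curve `t ↦ (c(t), c'(t), c_z(t))`. -/
noncomputable def lift {n : ℕ} (c : ℝ → Fin n → ℝ) (cz : ℝ → ℝ) (t : ℝ) :
    (Fin n → ℝ) × (Fin n → ℝ) × ℝ :=
  (c t, derivWithin c (Icc 0 1) t, cz t)

open Topology

open intervalIntegral MeasureTheory in
theorem hasDerivWithinAt_integral_left_Icc {f : ℝ → ℝ} {a b t : ℝ}
    (hf : ContinuousOn f (Icc a b)) (ht : t ∈ Icc a b) :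
    HasDerivWithinAt (fun τ => ∫ s in τ..b, f s) (-f t) (Icc a b) t := by
  have : Fact (t ∈ Icc a b) := ⟨ht⟩
  exact integral_hasDerivWithinAt_left
    (hf.mono (uIcc_subset_Icc ht (right_mem_Icc.2 (ht.1.trans ht.2)))).intervalIntegrable
    (hf.stronglyMeasurableAtFilter_nhdsWithin measurableSet_Icc t) (hf t ht)

theorem eq_of_hasDerivWithinAt_zero_Icc {f : ℝ → ℝ} {a b : ℝ}
    (hf : ∀ x ∈ Icc a b, HasDerivWithinAt f 0 (Icc a b) x) : ∀ x ∈ Icc a b, f x = f b := by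
  have hconst : ∀ x ∈ Icc a b, ‖f x - f a‖ ≤ 0 * (x - a) :=
    norm_image_sub_le_of_norm_deriv_le_segment' hf fun _ _ => norm_zero.le
  intro x hx
  have hxa := hconst x hx
  have hba := hconst b (right_mem_Icc.2 (hx.1.trans hx.2))
  simp only [zero_mul, norm_le_zero_iff, sub_eq_zero] at hxa hba
  rw [hxa, hba]

theorem eq_mul_exp_of_hasDerivWithinAt {lam g Z : ℝ → ℝ} {a b : ℝ}
    (hlam : ∀ t ∈ Icc a b, HasDerivWithinAt lam (-(lam t * Z t)) (Icc a b) t)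
    (hg : ∀ t ∈ Icc a b, HasDerivWithinAt g (-Z t) (Icc a b) t) :
    ∀ t ∈ Icc a b, lam t = lam b * Real.exp (g t - g b) := by
  have hderiv : ∀ t ∈ Icc a b,
      HasDerivWithinAt (fun τ => lam τ * Real.exp (-g τ)) 0 (Icc a b) t := fun t ht =>
    ((hlam t ht).mul (hg t ht).neg.exp).congr_deriv (by ring)
  intro t ht
  have h := eq_of_hasDerivWithinAt_zero_Icc hderiv t ht
  rw [sub_eq_neg_add, Real.exp_add, ← mul_assoc, ← h, mul_assoc, ← Real.exp_add,
    neg_add_cancel, Real.exp_zero, mul_one]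

theorem hasDerivWithinAt_integratingFactor_mul_iff {lam P : ℝ → ℝ} {s : Set ℝ} {t Z Q : ℝ}
    (hlam : HasDerivWithinAt lam (-(lam t * Z)) s t) (hne : lam t ≠ 0) :
    HasDerivWithinAt (fun τ => lam τ * P τ) (lam t * Q) s t ↔
      HasDerivWithinAt P (Q + P t * Z) s t := by
  constructor
  · intro hprod
    have hP : P =ᶠ[𝓝[s] t] fun τ => lam τ * P τ / lam τ := by
      filter_upwards [hlam.continuousWithinAt.eventually_ne hne] with τ hτ
      rw [mul_div_cancel_left₀ _ hτ]
    refine ((hprod.div hlam hne).congr_of_eventuallyEq hP (by simp [hne])).congr_deriv ?_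
    field_simp
    ring
  · intro hP
    exact (hlam.mul hP).congr_deriv (by ring)

theorem continuousOn_fderiv_apply_comp {X E F : Type*} [TopologicalSpace X]
    [NormedAddCommGroup E] [NormedSpace ℝ E] [NormedAddCommGroup F] [NormedSpace ℝ F]
    {L : E → F} {p : X → E} {s : Set X}
    (hL : ContDiff ℝ 1 L) (hp : ContinuousOn p s) (v : E) :
    ContinuousOn (fun t => fderiv ℝ L (p t) v) s :=
  ((hL.continuous_fderiv one_ne_zero).comp_continuousOn hp).clm_apply continuousOn_const

theorem continuousOn_lift {n : ℕ} {c : ℝ → Fin n → ℝ} {cz : ℝ → ℝ}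
    (hc : ContDiffOn ℝ 1 c (Icc 0 1)) (hcz : ContinuousOn cz (Icc 0 1)) :
    ContinuousOn (lift c cz) (Icc 0 1) :=
  hc.continuousOn.prodMk
    ((hc.continuousOn_derivWithin (uniqueDiffOn_Icc zero_lt_one) le_rfl).prodMk hcz)

theorem extended_EL_iff_herglotz_general {n : ℕ}
    (L : (Fin n → ℝ) × (Fin n → ℝ) × ℝ → ℝ) (hL : ContDiff ℝ 2 L)
    (c : ℝ → Fin n → ℝ) (cz : ℝ → ℝ)
    (hreg : ContDiffOn ℝ 2 (fun t => (c t, cz t)) (Icc 0 1)) :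
    -- (i) & (ii) with λ(1)=1 imply positivity of λ and the Herglotz equations
    (∀ lam : ℝ → ℝ, ContDiffOn ℝ 1 lam (Icc 0 1) → lam 1 = 1 →
      (∀ i : Fin n, ∀ t ∈ Icc (0:ℝ) 1,
        HasDerivWithinAt (fun τ => lam τ * pdQdot L i (lift c cz τ))
          (lam t * pdQ L i (lift c cz t)) (Icc 0 1) t) →
      (∀ t ∈ Icc (0:ℝ) 1,
        HasDerivWithinAt lam (-(lam t * pdZ L (lift c cz t))) (Icc 0 1) t) →
      (∀ t ∈ Icc (0:ℝ) 1, 0 < lam t) ∧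
      (∀ i : Fin n, ∀ t ∈ Icc (0:ℝ) 1,
        HasDerivWithinAt (fun τ => pdQdot L i (lift c cz τ))
          (pdQ L i (lift c cz t) + pdQdot L i (lift c cz t) * pdZ L (lift c cz t))
          (Icc 0 1) t)) ∧
    -- conversely, Herglotz equations produce such a multiplier
    ((∀ i : Fin n, ∀ t ∈ Icc (0:ℝ) 1,
        HasDerivWithinAt (fun τ => pdQdot L i (lift c cz τ))
          (pdQ L i (lift c cz t) + pdQdot L i (lift c cz t) * pdZ L (lift c cz t))
          (Icc 0 1) t) →
      (∀ i : Fin n, ∀ t ∈ Icc (0:ℝ) 1,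
        HasDerivWithinAt
          (fun τ => Real.exp (∫ s in τ..(1:ℝ), pdZ L (lift c cz s)) *
            pdQdot L i (lift c cz τ))
          (Real.exp (∫ s in t..(1:ℝ), pdZ L (lift c cz s)) * pdQ L i (lift c cz t))
          (Icc 0 1) t) ∧
      (∀ t ∈ Icc (0:ℝ) 1,
        HasDerivWithinAt (fun τ => Real.exp (∫ s in τ..(1:ℝ), pdZ L (lift c cz s)))
          (-(Real.exp (∫ s in t..(1:ℝ), pdZ L (lift c cz s)) * pdZ L (lift c cz t)))
          (Icc 0 1) t) ∧
      Real.exp (∫ s in (1:ℝ)..(1:ℝ), pdZ L (lift c cz s)) = 1) := by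
  have hZ : ContinuousOn (fun t => pdZ L (lift c cz t)) (Icc 0 1) :=
    continuousOn_fderiv_apply_comp (hL.of_le one_le_two)
      (continuousOn_lift (hreg.fst.of_le one_le_two) hreg.snd.continuousOn) _
  set g : ℝ → ℝ := fun τ => ∫ s in τ..(1:ℝ), pdZ L (lift c cz s)
  have hg : ∀ t ∈ Icc (0:ℝ) 1, HasDerivWithinAt g (-pdZ L (lift c cz t)) (Icc 0 1) t :=
    fun t ht => hasDerivWithinAt_integral_left_Icc hZ ht
  have hexp : ∀ t ∈ Icc (0:ℝ) 1, HasDerivWithinAt (fun τ => Real.exp (g τ))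
      (-(Real.exp (g t) * pdZ L (lift c cz t))) (Icc 0 1) t :=
    fun t ht => (hg t ht).exp.congr_deriv (by ring)
  refine ⟨fun lam _ hlam1 hEL hlam => ?_, fun hHerglotz => ⟨fun i t ht => ?_, hexp, by simp⟩⟩
  · have hlam_eq : ∀ t ∈ Icc (0:ℝ) 1, lam t = Real.exp (g t) := fun t ht => by
      simpa [hlam1, g] using eq_mul_exp_of_hasDerivWithinAt hlam hg t ht
    have hpos : ∀ t ∈ Icc (0:ℝ) 1, 0 < lam t := fun t ht => hlam_eq t ht ▸ Real.exp_pos _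
    exact ⟨hpos, fun i t ht =>
      (hasDerivWithinAt_integratingFactor_mul_iff (hlam t ht) (hpos t ht).ne').1 (hEL i t ht)⟩
  · exact (hasDerivWithinAt_integratingFactor_mul_iff (hexp t ht) (Real.exp_pos _).ne').2
      (hHerglotz i t ht)

/-- Equivalence between the Euler–Lagrange equations of the extended Lagrangian
`𝓛_λ = ż - λ(ż - L)` with natural boundary condition `λ(1) = 1`, and the Herglotz
equations: any multiplier `λ` satisfying (i) `d/dt[λ ∂L/∂q̇ⁱ] = λ ∂L/∂qⁱ` and
(ii) `λ' = -λ ∂L/∂z` with `λ(1) = 1` is positive and forces the Herglotz equations;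
conversely, the Herglotz equations give such a multiplier
`λ(t) = exp(∫_t¹ ∂L/∂z ds)`. -/
theorem extended_EL_iff_herglotz {n : ℕ}
    (L : (Fin n → ℝ) × (Fin n → ℝ) × ℝ → ℝ) (hL : ContDiff ℝ 2 L)
    (c : ℝ → Fin n → ℝ) (cz : ℝ → ℝ)
    (hreg : ContDiffOn ℝ 2 (fun t => (c t, cz t)) (Icc 0 1))
    (hode : ∀ t ∈ Icc (0:ℝ) 1,
      HasDerivWithinAt cz (L (lift c cz t)) (Icc 0 1) t) :
    -- (i) & (ii) with λ(1)=1 imply positivity of λ and the Herglotz equations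
    (∀ lam : ℝ → ℝ, ContDiffOn ℝ 1 lam (Icc 0 1) → lam 1 = 1 →
      (∀ i : Fin n, ∀ t ∈ Icc (0:ℝ) 1,
        HasDerivWithinAt (fun τ => lam τ * pdQdot L i (lift c cz τ))
          (lam t * pdQ L i (lift c cz t)) (Icc 0 1) t) →
      (∀ t ∈ Icc (0:ℝ) 1,
        HasDerivWithinAt lam (-(lam t * pdZ L (lift c cz t))) (Icc 0 1) t) →
      (∀ t ∈ Icc (0:ℝ) 1, 0 < lam t) ∧
      (∀ i : Fin n, ∀ t ∈ Icc (0:ℝ) 1,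
        HasDerivWithinAt (fun τ => pdQdot L i (lift c cz τ))
          (pdQ L i (lift c cz t) + pdQdot L i (lift c cz t) * pdZ L (lift c cz t))
          (Icc 0 1) t)) ∧
    -- conversely, Herglotz equations produce such a multiplier
    ((∀ i : Fin n, ∀ t ∈ Icc (0:ℝ) 1,
        HasDerivWithinAt (fun τ => pdQdot L i (lift c cz τ))
          (pdQ L i (lift c cz t) + pdQdot L i (lift c cz t) * pdZ L (lift c cz t))
          (Icc 0 1) t) →
      (∀ i : Fin n, ∀ t ∈ Icc (0:ℝ) 1,
        HasDerivWithinAt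
          (fun τ => Real.exp (∫ s in τ..(1:ℝ), pdZ L (lift c cz s)) *
            pdQdot L i (lift c cz τ))
          (Real.exp (∫ s in t..(1:ℝ), pdZ L (lift c cz s)) * pdQ L i (lift c cz t))
          (Icc 0 1) t) ∧
      (∀ t ∈ Icc (0:ℝ) 1,
        HasDerivWithinAt (fun τ => Real.exp (∫ s in τ..(1:ℝ), pdZ L (lift c cz s)))
          (-(Real.exp (∫ s in t..(1:ℝ), pdZ L (lift c cz s)) * pdZ L (lift c cz t)))
          (Icc 0 1) t) ∧
      Real.exp (∫ s in (1:ℝ)..(1:ℝ), pdZ L (lift c cz s)) = 1) :=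
  extended_EL_iff_herglotz_general L hL c cz hreg
end

section
/- Let L : ℝⁿ × ℝⁿ × ℝ → ℝ and ψ¹, …, ψᵏ : ℝⁿ × ℝⁿ × ℝ → ℝ be C² functions of (q, q̇, z), set φ⁰(q, z, q̇, ż) = ż − L(q, q̇, z) and φᵅ(q, z, q̇, ż) = ψᵅ(q, q̇, z) for α = 1,…,k. Let (c, c_z) : [0,1] → ℝⁿ × ℝ be C² and λ₀, …, λₖ : [0,1] → ℝ be C¹ with λ₀(t) ≠ 0 for all t. Define μ_α(t) = λ_α(t)/λ₀(t) and 𝓛_μ(q, q̇, z, t) = L(q, q̇, z) − Σ_α μ_α(t) ψᵅ(q, q̇, z). Then the following are equivalent: (A) along (c(t), c_z(t), c'(t), c_z'(t)) the vakonomic equations hold: for each i, d/dt[Σ_a λ_a ∂φᵃ/∂q̇ⁱ] − Σ_a λ_a ∂φᵃ/∂qⁱ = 0; d/dt[Σ_a λ_a ∂φᵃ/∂ż] − Σ_a λ_a ∂φᵃ/∂z = 0; and φᵃ = 0 for a = 0,…,k. (B) along (c(t), c'(t), c_z(t)): for each i, d/dt[∂𝓛_μ/∂q̇ⁱ] − ∂𝓛_μ/∂qⁱ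 = (∂𝓛_μ/∂q̇ⁱ)(∂𝓛_μ/∂z); ψᵅ(c, c', c_z) = 0 for α = 1,…,k; c_z' = 𝓛_μ(c, c', c_z, t); and λ₀'(t) = −λ₀(t) ∂𝓛_μ/∂z. -/
/-!
Since the `ψᵅ` do not involve `ż`, whenever `λ₀ ≠ 0` the vakonomic Lagrangian is
`∑ₐ λₐ φᵃ = λ₀ (ż - 𝓛_μ(q, q̇, z))`. Differentiating, the `q`-, `q̇`- and `z`-partials of
`∑ₐ λₐ φᵃ` are `-λ₀` times those of `𝓛_μ`, while its `ż`-partial is `λ₀`. Hence the `z`-equation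
reads `λ₀' = -λ₀ ∂𝓛_μ/∂z`, and substituting this into the derivative of `-λ₀ ∂𝓛_μ/∂q̇ⁱ` turns
the `q`-equations into the Herglotz equations. Finally `φ = 0` means `ψ = 0` and `ż = L = 𝓛_μ`.
-/

open Set

section PartialsVak
/-! Partial derivatives of constraints `φ(q, z, q̇, ż)` on `T(ℝⁿ × ℝ)`. -/

noncomputable def Dq {n : ℕ} (i : Fin n)
    (f : (Fin n → ℝ) × ℝ × (Fin n → ℝ) × ℝ → ℝ)
    (p : (Fin n → ℝ) × ℝ × (Fin n → ℝ) × ℝ) : ℝ :=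
  fderiv ℝ f p (Pi.single i 1, 0, 0, 0)

noncomputable def Dz {n : ℕ}
    (f : (Fin n → ℝ) × ℝ × (Fin n → ℝ) × ℝ → ℝ)
    (p : (Fin n → ℝ) × ℝ × (Fin n → ℝ) × ℝ) : ℝ :=
  fderiv ℝ f p (0, 1, 0, 0)

noncomputable def Dqdot {n : ℕ} (i : Fin n)
    (f : (Fin n → ℝ) × ℝ × (Fin n → ℝ) × ℝ → ℝ)
    (p : (Fin n → ℝ) × ℝ × (Fin n → ℝ) × ℝ) : ℝ :=
  fderiv ℝ f p (0, 0, Pi.single i 1, 0)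

noncomputable def Dzdot {n : ℕ}
    (f : (Fin n → ℝ) × ℝ × (Fin n → ℝ) × ℝ → ℝ)
    (p : (Fin n → ℝ) × ℝ × (Fin n → ℝ) × ℝ) : ℝ :=
  fderiv ℝ f p (0, 0, 0, 1)

end PartialsVak

section PartialsLag
/-! Partial derivatives of Lagrangian-type functions `F(q, q̇, z)` on `Tℝⁿ × ℝ`. -/

noncomputable def pQ {n : ℕ} (i : Fin n)
    (F : (Fin n → ℝ) × (Fin n → ℝ) × ℝ → ℝ)
    (p : (Fin n → ℝ) × (Fin n → ℝ) × ℝ) : ℝ :=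
  fderiv ℝ F p (Pi.single i 1, 0, 0)

noncomputable def pQdot {n : ℕ} (i : Fin n)
    (F : (Fin n → ℝ) × (Fin n → ℝ) × ℝ → ℝ)
    (p : (Fin n → ℝ) × (Fin n → ℝ) × ℝ) : ℝ :=
  fderiv ℝ F p (0, Pi.single i 1, 0)

noncomputable def pZ {n : ℕ}
    (F : (Fin n → ℝ) × (Fin n → ℝ) × ℝ → ℝ)
    (p : (Fin n → ℝ) × (Fin n → ℝ) × ℝ) : ℝ :=
  fderiv ℝ F p (0, 0, 1)

end PartialsLag

/-- The lifted curve `t ↦ (c(t), c_z(t), c'(t), c_z'(t))` in `T(ℝⁿ × ℝ)`. -/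
noncomputable def Gam {n : ℕ} (c : ℝ → Fin n → ℝ) (cz : ℝ → ℝ) (t : ℝ) :
    (Fin n → ℝ) × ℝ × (Fin n → ℝ) × ℝ :=
  (c t, cz t, derivWithin c (Icc 0 1) t, derivWithin cz (Icc 0 1) t)

/-- The lifted curve `t ↦ (c(t), c'(t), c_z(t))` in `Tℝⁿ × ℝ`. -/
noncomputable def liftQ {n : ℕ} (c : ℝ → Fin n → ℝ) (cz : ℝ → ℝ) (t : ℝ) :
    (Fin n → ℝ) × (Fin n → ℝ) × ℝ :=
  (c t, derivWithin c (Icc 0 1) t, cz t)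

/-- The coordinate change `(q, z, q̇, ż) ↦ (q, q̇, z)`. -/
noncomputable def lagCoords (n : ℕ) :
    (Fin n → ℝ) × ℝ × (Fin n → ℝ) × ℝ →L[ℝ] (Fin n → ℝ) × (Fin n → ℝ) × ℝ :=
  (ContinuousLinearMap.fst ℝ _ _).prod
    (((ContinuousLinearMap.fst ℝ _ _).comp
        ((ContinuousLinearMap.snd ℝ _ _).comp (ContinuousLinearMap.snd ℝ _ _))).prod
      ((ContinuousLinearMap.fst ℝ _ _).comp (ContinuousLinearMap.snd ℝ _ _)))

@[simp]
theorem lagCoords_apply {n : ℕ} (p : (Fin n → ℝ) × ℝ × (Fin n → ℝ) × ℝ) :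
    lagCoords n p = (p.1, p.2.2.1, p.2.1) :=
  rfl

noncomputable def vakonomicConstraints {n k : ℕ} (L : (Fin n → ℝ) × (Fin n → ℝ) × ℝ → ℝ)
    (ψ : Fin k → (Fin n → ℝ) × (Fin n → ℝ) × ℝ → ℝ) :
    Fin (k + 1) → (Fin n → ℝ) × ℝ × (Fin n → ℝ) × ℝ → ℝ :=
  Fin.cons (fun p => p.2.2.2 - L (lagCoords n p)) (fun α p => ψ α (lagCoords n p))

def herglotzLagrangian {n k : ℕ} (L : (Fin n → ℝ) × (Fin n → ℝ) × ℝ → ℝ)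
    (ψ : Fin k → (Fin n → ℝ) × (Fin n → ℝ) × ℝ → ℝ) (μ : Fin k → ℝ)
    (p : (Fin n → ℝ) × (Fin n → ℝ) × ℝ) : ℝ :=
  L p - ∑ α, μ α * ψ α p

noncomputable def normalizedMultipliers {k : ℕ} (l : Fin (k + 1) → ℝ) : Fin k → ℝ :=
  fun α => l α.succ / l 0

theorem hasDerivWithinAt_neg_mul_iff {l f : ℝ → ℝ} {s : Set ℝ} {t Q Z : ℝ}
    (hl : ∀ τ ∈ s, l τ ≠ 0) (ht : t ∈ s) (hl' : HasDerivWithinAt l (-(l t * Z)) s t) :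
    HasDerivWithinAt (fun τ => -(l τ * f τ)) (-(l t * Q)) s t ↔
      HasDerivWithinAt f (Q + f t * Z) s t := by
  constructor
  · intro h
    refine (h.fun_neg.fun_div hl' (hl t ht)).congr_of_mem (fun τ hτ => ?_) ht |>.congr_deriv ?_
    · field_simp [hl τ hτ]
    · field_simp [hl t ht]; ring
  · intro h
    exact (hl'.fun_mul h).fun_neg.congr_deriv (by ring)

section Constraints

variable {n k : ℕ} {L : (Fin n → ℝ) × (Fin n → ℝ) × ℝ → ℝ}
  {ψ : Fin k → (Fin n → ℝ) × (Fin n → ℝ) × ℝ → ℝ}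

theorem differentiable_vakonomicConstraints (hL : Differentiable ℝ L)
    (hψ : ∀ α, Differentiable ℝ (ψ α)) (a : Fin (k + 1)) :
    Differentiable ℝ (vakonomicConstraints L ψ a) := by
  cases a using Fin.cases with
  | zero => simp only [vakonomicConstraints, Fin.cons_zero]; fun_prop
  | succ α => simp only [vakonomicConstraints, Fin.cons_succ]; fun_prop

theorem differentiable_herglotzLagrangian (hL : Differentiable ℝ L)
    (hψ : ∀ α, Differentiable ℝ (ψ α)) (μ : Fin k → ℝ) :
    Differentiable ℝ (herglotzLagrangian L ψ μ) := by
  unfold herglotzLagrangian; fun_prop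

theorem vakonomicConstraints_eq_zero_iff (μ : Fin k → ℝ)
    (p : (Fin n → ℝ) × ℝ × (Fin n → ℝ) × ℝ) :
    (∀ a, vakonomicConstraints L ψ a p = 0) ↔
      (∀ α, ψ α (lagCoords n p) = 0) ∧ p.2.2.2 = herglotzLagrangian L ψ μ (lagCoords n p) := by
  simp only [Fin.forall_fin_succ, vakonomicConstraints, Fin.cons_zero, Fin.cons_succ,
    herglotzLagrangian, lagCoords_apply, sub_eq_zero]
  constructor <;> rintro ⟨h₁, h₂⟩ <;> simp_all

theorem sum_mul_vakonomicConstraints {l : Fin (k + 1) → ℝ} (hl : l 0 ≠ 0)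
    (p : (Fin n → ℝ) × ℝ × (Fin n → ℝ) × ℝ) :
    ∑ a, l a * vakonomicConstraints L ψ a p =
      l 0 * (p.2.2.2 - herglotzLagrangian L ψ (normalizedMultipliers l) (lagCoords n p)) := by
  simp only [Fin.sum_univ_succ, vakonomicConstraints, Fin.cons_zero, Fin.cons_succ,
    herglotzLagrangian, normalizedMultipliers, lagCoords_apply, mul_sub, Finset.mul_sum]
  have hcancel : ∀ α, l 0 * (l α.succ / l 0 * ψ α (p.1, p.2.2.1, p.2.1)) =
      l α.succ * ψ α (p.1, p.2.2.1, p.2.1) := fun α => by field_simp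
  simp only [hcancel]
  ring

theorem sum_mul_fderiv_vakonomicConstraints (hL : Differentiable ℝ L)
    (hψ : ∀ α, Differentiable ℝ (ψ α)) {l : Fin (k + 1) → ℝ} (hl : l 0 ≠ 0)
    (p w : (Fin n → ℝ) × ℝ × (Fin n → ℝ) × ℝ) :
    ∑ a, l a * fderiv ℝ (vakonomicConstraints L ψ a) p w =
      l 0 * (w.2.2.2 - fderiv ℝ (herglotzLagrangian L ψ (normalizedMultipliers l))
        (lagCoords n p) (lagCoords n w)) := by
  have hφ := differentiable_vakonomicConstraints hL hψ
  have h𝓛 := differentiable_herglotzLagrangian hL hψ (normalizedMultipliers l)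
  have hsum : HasFDerivAt (fun p => ∑ a, l a * vakonomicConstraints L ψ a p)
      (∑ a, l a • fderiv ℝ (vakonomicConstraints L ψ a) p) p :=
    HasFDerivAt.fun_sum fun a _ => ((hφ a p).hasFDerivAt).const_mul (l a)
  have hzdot : HasFDerivAt (fun p : (Fin n → ℝ) × ℝ × (Fin n → ℝ) × ℝ => p.2.2.2)
      ((ContinuousLinearMap.snd ℝ _ _).comp
        ((ContinuousLinearMap.snd ℝ _ _).comp (ContinuousLinearMap.snd ℝ _ _))) p :=
    hasFDerivAt_snd.snd.snd
  have h𝓛P : HasFDerivAt (fun p => herglotzLagrangian L ψ (normalizedMultipliers l) (lagCoords n p))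
      ((fderiv ℝ (herglotzLagrangian L ψ (normalizedMultipliers l)) (lagCoords n p)).comp
        (lagCoords n)) p :=
    (h𝓛 _).hasFDerivAt.comp p (lagCoords n).hasFDerivAt
  simp_rw [sum_mul_vakonomicConstraints hl] at hsum
  simpa using congrArg (· w) (hsum.unique ((hzdot.fun_sub h𝓛P).const_mul (l 0)))

theorem sum_mul_Dq_vakonomicConstraints (hL : Differentiable ℝ L)
    (hψ : ∀ α, Differentiable ℝ (ψ α)) {l : Fin (k + 1) → ℝ} (hl : l 0 ≠ 0) (i : Fin n)
    (p : (Fin n → ℝ) × ℝ × (Fin n → ℝ) × ℝ) :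
    ∑ a, l a * Dq i (vakonomicConstraints L ψ a) p =
      -(l 0 * pQ i (herglotzLagrangian L ψ (normalizedMultipliers l)) (lagCoords n p)) := by
  simpa [Dq, pQ] using sum_mul_fderiv_vakonomicConstraints hL hψ hl p (Pi.single i 1, 0, 0, 0)

theorem sum_mul_Dqdot_vakonomicConstraints (hL : Differentiable ℝ L)
    (hψ : ∀ α, Differentiable ℝ (ψ α)) {l : Fin (k + 1) → ℝ} (hl : l 0 ≠ 0) (i : Fin n)
    (p : (Fin n → ℝ) × ℝ × (Fin n → ℝ) × ℝ) :
    ∑ a, l a * Dqdot i (vakonomicConstraints L ψ a) p =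
      -(l 0 * pQdot i (herglotzLagrangian L ψ (normalizedMultipliers l)) (lagCoords n p)) := by
  simpa [Dqdot, pQdot] using
    sum_mul_fderiv_vakonomicConstraints hL hψ hl p (0, 0, Pi.single i 1, 0)

theorem sum_mul_Dz_vakonomicConstraints (hL : Differentiable ℝ L)
    (hψ : ∀ α, Differentiable ℝ (ψ α)) {l : Fin (k + 1) → ℝ} (hl : l 0 ≠ 0)
    (p : (Fin n → ℝ) × ℝ × (Fin n → ℝ) × ℝ) :
    ∑ a, l a * Dz (vakonomicConstraints L ψ a) p =
      -(l 0 * pZ (herglotzLagrangian L ψ (normalizedMultipliers l)) (lagCoords n p)) := by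
  simpa [Dz, pZ] using sum_mul_fderiv_vakonomicConstraints hL hψ hl p (0, 1, 0, 0)

theorem sum_mul_Dzdot_vakonomicConstraints (hL : Differentiable ℝ L)
    (hψ : ∀ α, Differentiable ℝ (ψ α)) {l : Fin (k + 1) → ℝ} (hl : l 0 ≠ 0)
    (p : (Fin n → ℝ) × ℝ × (Fin n → ℝ) × ℝ) :
    ∑ a, l a * Dzdot (vakonomicConstraints L ψ a) p = l 0 := by
  simpa [Dzdot, ← Prod.zero_eq_mk] using sum_mul_fderiv_vakonomicConstraints hL hψ hl p (0, 0, 0, 1)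

end Constraints

section Curve

variable {n k : ℕ} {L : (Fin n → ℝ) × (Fin n → ℝ) × ℝ → ℝ}
  {ψ : Fin k → (Fin n → ℝ) × (Fin n → ℝ) × ℝ → ℝ} {lam : Fin (k + 1) → ℝ → ℝ}
  {γ : ℝ → (Fin n → ℝ) × ℝ × (Fin n → ℝ) × ℝ} {s : Set ℝ} {t : ℝ}

theorem hasDerivWithinAt_sum_mul_Dzdot_iff (hL : Differentiable ℝ L)
    (hψ : ∀ α, Differentiable ℝ (ψ α)) (hlam0 : ∀ τ ∈ s, lam 0 τ ≠ 0) (ht : t ∈ s) :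
    HasDerivWithinAt (fun τ => ∑ a, lam a τ * Dzdot (vakonomicConstraints L ψ a) (γ τ))
        (∑ a, lam a t * Dz (vakonomicConstraints L ψ a) (γ t)) s t ↔
      HasDerivWithinAt (lam 0) (-(lam 0 t *
        pZ (herglotzLagrangian L ψ (normalizedMultipliers (lam · t))) (lagCoords n (γ t))))
        s t := by
  rw [sum_mul_Dz_vakonomicConstraints hL hψ (hlam0 t ht)]
  exact (Set.EqOn.eventuallyEq_nhdsWithin fun τ hτ =>
    sum_mul_Dzdot_vakonomicConstraints hL hψ (hlam0 τ hτ) (γ τ)).hasDerivWithinAt_iff_of_mem ht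

theorem hasDerivWithinAt_sum_mul_Dqdot_iff (hL : Differentiable ℝ L)
    (hψ : ∀ α, Differentiable ℝ (ψ α)) (hlam0 : ∀ τ ∈ s, lam 0 τ ≠ 0) (ht : t ∈ s)
    (hlam0' : HasDerivWithinAt (lam 0) (-(lam 0 t *
      pZ (herglotzLagrangian L ψ (normalizedMultipliers (lam · t))) (lagCoords n (γ t)))) s t)
    (i : Fin n) :
    HasDerivWithinAt (fun τ => ∑ a, lam a τ * Dqdot i (vakonomicConstraints L ψ a) (γ τ))
        (∑ a, lam a t * Dq i (vakonomicConstraints L ψ a) (γ t)) s t ↔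
      HasDerivWithinAt
        (fun τ => pQdot i (herglotzLagrangian L ψ (normalizedMultipliers (lam · τ)))
          (lagCoords n (γ τ)))
        (pQ i (herglotzLagrangian L ψ (normalizedMultipliers (lam · t))) (lagCoords n (γ t)) +
          pQdot i (herglotzLagrangian L ψ (normalizedMultipliers (lam · t))) (lagCoords n (γ t)) *
          pZ (herglotzLagrangian L ψ (normalizedMultipliers (lam · t))) (lagCoords n (γ t)))
        s t := by
  rw [sum_mul_Dq_vakonomicConstraints hL hψ (hlam0 t ht),
    Filter.EventuallyEq.hasDerivWithinAt_iff_of_mem (Set.EqOn.eventuallyEq_nhdsWithin fun τ hτ =>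
      sum_mul_Dqdot_vakonomicConstraints hL hψ (hlam0 τ hτ) i (γ τ)) ht]
  exact hasDerivWithinAt_neg_mul_iff hlam0 ht hlam0'

theorem vakonomicConstraints_Gam_eq_zero_iff {c : ℝ → Fin n → ℝ} {cz : ℝ → ℝ}
    (hcz : DifferentiableWithinAt ℝ cz (Icc 0 1) t) (ht : t ∈ Icc (0 : ℝ) 1) (μ : Fin k → ℝ) :
    (∀ a, vakonomicConstraints L ψ a (Gam c cz t) = 0) ↔
      (∀ α, ψ α (liftQ c cz t) = 0) ∧
        HasDerivWithinAt cz (herglotzLagrangian L ψ μ (liftQ c cz t)) (Icc 0 1) t := by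
  refine (vakonomicConstraints_eq_zero_iff μ _).trans (and_congr_right' ⟨fun h => ?_, fun h => ?_⟩)
  · exact h ▸ hcz.hasDerivWithinAt
  · exact h.derivWithin (uniqueDiffOn_Icc zero_lt_one t ht)

end Curve

theorem vakonomic_iff_herglotz_normalized_general {n k : ℕ}
    (L : (Fin n → ℝ) × (Fin n → ℝ) × ℝ → ℝ) (hL : ContDiff ℝ 2 L)
    (ψ : Fin k → (Fin n → ℝ) × (Fin n → ℝ) × ℝ → ℝ) (hψ : ∀ α, ContDiff ℝ 2 (ψ α))
    (φ : Fin (k + 1) → (Fin n → ℝ) × ℝ × (Fin n → ℝ) × ℝ → ℝ)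
    (hφ : φ = Fin.cons (fun p => p.2.2.2 - L (p.1, p.2.2.1, p.2.1))
      (fun α p => ψ α (p.1, p.2.2.1, p.2.1)))
    (c : ℝ → Fin n → ℝ) (cz : ℝ → ℝ)
    (hreg : ContDiffOn ℝ 2 (fun t => (c t, cz t)) (Icc 0 1))
    (lam : Fin (k + 1) → ℝ → ℝ)
    (hlam0 : ∀ t ∈ Icc (0:ℝ) 1, lam 0 t ≠ 0) :
    -- (A): the vakonomic equations with multipliers λ₀, …, λₖ ...
    ((∀ i : Fin n, ∀ t ∈ Icc (0:ℝ) 1,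
        HasDerivWithinAt (fun τ => ∑ a, lam a τ * Dqdot i (φ a) (Gam c cz τ))
          (∑ a, lam a t * Dq i (φ a) (Gam c cz t)) (Icc 0 1) t) ∧
     (∀ t ∈ Icc (0:ℝ) 1,
        HasDerivWithinAt (fun τ => ∑ a, lam a τ * Dzdot (φ a) (Gam c cz τ))
          (∑ a, lam a t * Dz (φ a) (Gam c cz t)) (Icc 0 1) t) ∧
     (∀ a, ∀ t ∈ Icc (0:ℝ) 1, φ a (Gam c cz t) = 0))
    ↔
    -- (B): Herglotz-type equations for 𝓛_μ = L - μ_α ψᵅ, with μ_α = λ_α/λ₀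
    ((∀ i : Fin n, ∀ t ∈ Icc (0:ℝ) 1,
        HasDerivWithinAt
          (fun τ => pQdot i (fun p => L p - ∑ α, (lam α.succ τ / lam 0 τ) * ψ α p)
            (liftQ c cz τ))
          (pQ i (fun p => L p - ∑ α, (lam α.succ t / lam 0 t) * ψ α p) (liftQ c cz t) +
            pQdot i (fun p => L p - ∑ α, (lam α.succ t / lam 0 t) * ψ α p)
              (liftQ c cz t) *
            pZ (fun p => L p - ∑ α, (lam α.succ t / lam 0 t) * ψ α p) (liftQ c cz t))
          (Icc 0 1) t) ∧
     (∀ α, ∀ t ∈ Icc (0:ℝ) 1, ψ α (liftQ c cz t) = 0) ∧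
     (∀ t ∈ Icc (0:ℝ) 1,
        HasDerivWithinAt cz
          (L (liftQ c cz t) - ∑ α, (lam α.succ t / lam 0 t) * ψ α (liftQ c cz t))
          (Icc 0 1) t) ∧
     (∀ t ∈ Icc (0:ℝ) 1,
        HasDerivWithinAt (lam 0)
          (-(lam 0 t *
            pZ (fun p => L p - ∑ α, (lam α.succ t / lam 0 t) * ψ α p) (liftQ c cz t)))
          (Icc 0 1) t)) := by
  subst hφ
  have hLd : Differentiable ℝ L := hL.differentiable two_ne_zero
  have hψd : ∀ α, Differentiable ℝ (ψ α) := fun α => (hψ α).differentiable two_ne_zero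
  have hcz : ∀ t ∈ Icc (0 : ℝ) 1, DifferentiableWithinAt ℝ cz (Icc 0 1) t := fun t ht => by
    simpa using (hreg.differentiableOn two_ne_zero t ht).snd
  have hz := fun t (ht : t ∈ Icc (0 : ℝ) 1) =>
    hasDerivWithinAt_sum_mul_Dzdot_iff (γ := Gam c cz) hLd hψd hlam0 ht
  have hq := fun t (ht : t ∈ Icc (0 : ℝ) 1) =>
    hasDerivWithinAt_sum_mul_Dqdot_iff (γ := Gam c cz) hLd hψd hlam0 ht
  have hconstr := fun t (ht : t ∈ Icc (0 : ℝ) 1) =>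
    vakonomicConstraints_Gam_eq_zero_iff (L := L) (ψ := ψ) (c := c) (hcz t ht) ht
      (normalizedMultipliers (lam · t))
  constructor
  · rintro ⟨hA1, hA2, hA3⟩
    have hB4 := fun t ht => (hz t ht).1 (hA2 t ht)
    have hB23 := fun t ht => (hconstr t ht).1 fun a => hA3 a t ht
    exact ⟨fun i t ht => (hq t ht (hB4 t ht) i).1 (hA1 i t ht), fun α t ht => (hB23 t ht).1 α,
      fun t ht => (hB23 t ht).2, hB4⟩
  · rintro ⟨hB1, hB2, hB3, hB4⟩
    exact ⟨fun i t ht => (hq t ht (hB4 t ht) i).2 (hB1 i t ht), fun t ht => (hz t ht).2 (hB4 t ht),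
      fun a t ht => (hconstr t ht).2 ⟨fun α => hB2 α t ht, hB3 t ht⟩ a⟩

/-- Equivalence between (A) the vakonomic Euler–Lagrange equations with multipliers
`λ₀,…,λₖ` for the constraints `φ⁰ = ż - L`, `φᵅ = ψᵅ`, and (B) the Herglotz-type
equations for the normalized time-dependent Lagrangian `𝓛_μ = L - μ_α ψᵅ` with
`μ_α = λ_α / λ₀`, together with the constraints, the action equation
`c_z' = 𝓛_μ`, and the multiplier equation `λ₀' = -λ₀ ∂𝓛_μ/∂z`. -/
theorem vakonomic_iff_herglotz_normalized {n k : ℕ}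
    (L : (Fin n → ℝ) × (Fin n → ℝ) × ℝ → ℝ) (hL : ContDiff ℝ 2 L)
    (ψ : Fin k → (Fin n → ℝ) × (Fin n → ℝ) × ℝ → ℝ) (hψ : ∀ α, ContDiff ℝ 2 (ψ α))
    (φ : Fin (k + 1) → (Fin n → ℝ) × ℝ × (Fin n → ℝ) × ℝ → ℝ)
    (hφ : φ = Fin.cons (fun p => p.2.2.2 - L (p.1, p.2.2.1, p.2.1))
      (fun α p => ψ α (p.1, p.2.2.1, p.2.1)))
    (c : ℝ → Fin n → ℝ) (cz : ℝ → ℝ)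
    (hreg : ContDiffOn ℝ 2 (fun t => (c t, cz t)) (Icc 0 1))
    (lam : Fin (k + 1) → ℝ → ℝ) (hlam : ∀ a, ContDiffOn ℝ 1 (lam a) (Icc 0 1))
    (hlam0 : ∀ t ∈ Icc (0:ℝ) 1, lam 0 t ≠ 0) :
    -- (A): the vakonomic equations with multipliers λ₀, …, λₖ ...
    ((∀ i : Fin n, ∀ t ∈ Icc (0:ℝ) 1,
        HasDerivWithinAt (fun τ => ∑ a, lam a τ * Dqdot i (φ a) (Gam c cz τ))
          (∑ a, lam a t * Dq i (φ a) (Gam c cz t)) (Icc 0 1) t) ∧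
     (∀ t ∈ Icc (0:ℝ) 1,
        HasDerivWithinAt (fun τ => ∑ a, lam a τ * Dzdot (φ a) (Gam c cz τ))
          (∑ a, lam a t * Dz (φ a) (Gam c cz t)) (Icc 0 1) t) ∧
     (∀ a, ∀ t ∈ Icc (0:ℝ) 1, φ a (Gam c cz t) = 0))
    ↔
    -- (B): Herglotz-type equations for 𝓛_μ = L - μ_α ψᵅ, with μ_α = λ_α/λ₀
    ((∀ i : Fin n, ∀ t ∈ Icc (0:ℝ) 1,
        HasDerivWithinAt
          (fun τ => pQdot i (fun p => L p - ∑ α, (lam α.succ τ / lam 0 τ) * ψ α p)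
            (liftQ c cz τ))
          (pQ i (fun p => L p - ∑ α, (lam α.succ t / lam 0 t) * ψ α p) (liftQ c cz t) +
            pQdot i (fun p => L p - ∑ α, (lam α.succ t / lam 0 t) * ψ α p)
              (liftQ c cz t) *
            pZ (fun p => L p - ∑ α, (lam α.succ t / lam 0 t) * ψ α p) (liftQ c cz t))
          (Icc 0 1) t) ∧
     (∀ α, ∀ t ∈ Icc (0:ℝ) 1, ψ α (liftQ c cz t) = 0) ∧
     (∀ t ∈ Icc (0:ℝ) 1,
        HasDerivWithinAt cz
          (L (liftQ c cz t) - ∑ α, (lam α.succ t / lam 0 t) * ψ α (liftQ c cz t))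
          (Icc 0 1) t) ∧
     (∀ t ∈ Icc (0:ℝ) 1,
        HasDerivWithinAt (lam 0)
          (-(lam 0 t *
            pZ (fun p => L p - ∑ α, (lam α.succ t / lam 0 t) * ψ α p) (liftQ c cz t)))
          (Icc 0 1) t)) :=
  vakonomic_iff_herglotz_normalized_general L hL ψ hψ φ hφ c cz hreg lam hlam0
end

section
/- Let L : ℝⁿ × ℝⁿ × ℝ → ℝ and ψ¹, …, ψᵏ : ℝⁿ × ℝⁿ × ℝ → ℝ be C² functions of (q, q̇, z), and define the extended contact Lagrangian 𝓛 : (ℝⁿ × ℝᵏ) × (ℝⁿ × ℝᵏ) × ℝ → ℝ by 𝓛(q, μ, q̇, μ̇, z) = L(q, q̇, z) − Σ_α μ_α ψᵅ(q, q̇, z). Let (c, m) : [0,1] → ℝⁿ × ℝᵏ be C² and c_z : [0,1] → ℝ be C¹ with c_z'(t) = 𝓛(c(t), m(t), c'(t), m'(t), c_z(t)) for all t. Then (c, m, c_z) satisfies the Herglotz equations for 𝓛 in all n + k configuration variables if and only if along (c(t), c'(t), c_z(t)): (i) ψᵅ(c, c', c_z) = 0 for α = 1,…,k; (ii) c_z'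 = L(c, c', c_z) − Σ_α m_α(t) ψᵅ(c, c', c_z) = L(c, c', c_z); and (iii) for each i, d/dt[∂𝓛_m/∂q̇ⁱ] − ∂𝓛_m/∂qⁱ = (∂𝓛_m/∂q̇ⁱ)(∂𝓛_m/∂z), where 𝓛_m(q, q̇, z, t) = L(q, q̇, z) − Σ_α m_α(t) ψᵅ(q, q̇, z). -/
/-!
The extended Lagrangian is affine in the multipliers and does not involve their velocities, so
its Herglotz equation in `μ_α` reads `0 = -ψᵅ`: it is exactly the constraint. Differentiating it
in `(q, q̇, z)` only sees the multipliers through their current values `m(t)`, so its Herglotz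
equations in `q` are those of `L - m_α(t) ψᵅ`, and once the constraints hold the action equation
`c_z' = 𝓛` becomes `c_z' = L`.
-/

open Set

/-- The lifted curve of `(c, m)` with action `c_z` in
`T(ℝⁿ × ℝᵏ) × ℝ`, the phase space of the extended Lagrangian. -/
noncomputable def liftExt {n k : ℕ} (c : ℝ → Fin n → ℝ) (m : ℝ → Fin k → ℝ)
    (cz : ℝ → ℝ) (t : ℝ) :
    ((Fin n → ℝ) × (Fin k → ℝ)) × ((Fin n → ℝ) × (Fin k → ℝ)) × ℝ :=
  ((c t, m t), (derivWithin c (Icc 0 1) t, derivWithin m (Icc 0 1) t), cz t)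

theorem hasDerivWithinAt_const_iff {𝕜 F : Type*} [NontriviallyNormedField 𝕜]
    [NormedAddCommGroup F] [NormedSpace 𝕜 F] {s : Set 𝕜} {x : 𝕜} {a f' : F}
    (hs : UniqueDiffWithinAt 𝕜 s x) :
    HasDerivWithinAt (fun _ => a) f' s x ↔ f' = 0 :=
  ⟨fun h => hs.eq_deriv s h (hasDerivWithinAt_const x s a),
    fun h => h ▸ hasDerivWithinAt_const x s a⟩

section MultiplierLagrangian

variable {ι E F : Type*} [Fintype ι] [NormedAddCommGroup E] [NormedSpace ℝ E]
  [NormedAddCommGroup F] [NormedSpace ℝ F]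

theorem fderiv_sub_sum_const_mul_apply {L : F → ℝ} {ψ : ι → F → ℝ} {x : F}
    (hL : DifferentiableAt ℝ L x) (hψ : ∀ α, DifferentiableAt ℝ (ψ α) x) (c : ι → ℝ)
    (w : F) :
    fderiv ℝ (fun y => L y - ∑ α, c α * ψ α y) x w
      = fderiv ℝ L x w - ∑ α, c α * fderiv ℝ (ψ α) x w := by
  have hsum : HasFDerivAt (fun y => ∑ α, c α * ψ α y) (∑ α, c α • fderiv ℝ (ψ α) x) x :=
    HasFDerivAt.fun_sum fun α _ => (hψ α).hasFDerivAt.const_mul (c α)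
  rw [(hL.hasFDerivAt.fun_sub hsum).fderiv]
  simp

theorem fderiv_sub_sum_mul_comp_apply {L : F → ℝ} {ψ : ι → F → ℝ} (π : E →L[ℝ] F)
    (μ : ι → E →L[ℝ] ℝ) {p : E} (hL : DifferentiableAt ℝ L (π p))
    (hψ : ∀ α, DifferentiableAt ℝ (ψ α) (π p)) (v : E) :
    fderiv ℝ (fun p => L (π p) - ∑ α, μ α p * ψ α (π p)) p v
      = fderiv ℝ (fun x => L x - ∑ α, μ α p * ψ α x) (π p) (π v)
        - ∑ α, μ α v * ψ α (π p) := by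
  have hsum : HasFDerivAt (fun p => ∑ α, μ α p * ψ α (π p))
      (∑ α, (μ α p • (fderiv ℝ (ψ α) (π p)).comp π + ψ α (π p) • μ α)) p :=
    HasFDerivAt.fun_sum fun α _ =>
      (μ α).hasFDerivAt.mul ((hψ α).hasFDerivAt.comp p π.hasFDerivAt)
  have hext : HasFDerivAt (fun p => L (π p) - ∑ α, μ α p * ψ α (π p)) _ p :=
    (hL.hasFDerivAt.comp p π.hasFDerivAt).fun_sub hsum
  rw [hext.fderiv, fderiv_sub_sum_const_mul_apply hL hψ]
  simp [Finset.sum_add_distrib, mul_comm]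
  ring

end MultiplierLagrangian

section ExtendedLagrangian

variable {n k : ℕ} {L : (Fin n → ℝ) × (Fin n → ℝ) × ℝ → ℝ}
  {ψ : Fin k → (Fin n → ℝ) × (Fin n → ℝ) × ℝ → ℝ}
  (c : ℝ → Fin n → ℝ) (m : ℝ → Fin k → ℝ) (cz : ℝ → ℝ) (t : ℝ)

/-- `𝓛((q, μ), (q̇, μ̇), z) = L(q, q̇, z) - Σ_α μ_α ψᵅ(q, q̇, z)`. -/
noncomputable def extendedLagrangian (L : (Fin n → ℝ) × (Fin n → ℝ) × ℝ → ℝ)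
    (ψ : Fin k → (Fin n → ℝ) × (Fin n → ℝ) × ℝ → ℝ)
    (p : ((Fin n → ℝ) × (Fin k → ℝ)) × ((Fin n → ℝ) × (Fin k → ℝ)) × ℝ) : ℝ :=
  L (p.1.1, p.2.1.1, p.2.2) - ∑ α, p.1.2 α * ψ α (p.1.1, p.2.1.1, p.2.2)

theorem extendedLagrangian_liftExt :
    extendedLagrangian L ψ (liftExt c m cz t)
      = L (liftQ c cz t) - ∑ α, m t α * ψ α (liftQ c cz t) :=
  rfl

theorem fderiv_extendedLagrangian_liftExt_apply (hL : Differentiable ℝ L)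
    (hψ : ∀ α, Differentiable ℝ (ψ α))
    (v : ((Fin n → ℝ) × (Fin k → ℝ)) × ((Fin n → ℝ) × (Fin k → ℝ)) × ℝ) :
    fderiv ℝ (extendedLagrangian L ψ) (liftExt c m cz t) v
      = fderiv ℝ (fun x => L x - ∑ α, m t α * ψ α x) (liftQ c cz t) (v.1.1, v.2.1.1, v.2.2)
        - ∑ α, v.1.2 α * ψ α (liftQ c cz t) := by
  unfold extendedLagrangian
  exact fderiv_sub_sum_mul_comp_apply
    (((ContinuousLinearMap.fst ℝ _ _).comp (ContinuousLinearMap.fst ℝ _ _)).prod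
      (((ContinuousLinearMap.fst ℝ _ _).comp
          ((ContinuousLinearMap.fst ℝ _ _).comp (ContinuousLinearMap.snd ℝ _ _))).prod
        ((ContinuousLinearMap.snd ℝ _ _).comp (ContinuousLinearMap.snd ℝ _ _))))
    (fun α => (ContinuousLinearMap.proj α).comp
      ((ContinuousLinearMap.snd ℝ _ _).comp (ContinuousLinearMap.fst ℝ _ _)))
    (hL _) (fun α => hψ α _) v

theorem fderiv_extendedLagrangian_liftExt_q (hL : Differentiable ℝ L)
    (hψ : ∀ α, Differentiable ℝ (ψ α)) (i : Fin n) :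
    fderiv ℝ (extendedLagrangian L ψ) (liftExt c m cz t) ((Pi.single i 1, 0), (0, 0), 0)
      = pQ i (fun p => L p - ∑ α, m t α * ψ α p) (liftQ c cz t) := by
  simp [fderiv_extendedLagrangian_liftExt_apply c m cz t hL hψ, pQ]

theorem fderiv_extendedLagrangian_liftExt_qdot (hL : Differentiable ℝ L)
    (hψ : ∀ α, Differentiable ℝ (ψ α)) (i : Fin n) :
    fderiv ℝ (extendedLagrangian L ψ) (liftExt c m cz t) ((0, 0), (Pi.single i 1, 0), 0)
      = pQdot i (fun p => L p - ∑ α, m t α * ψ α p) (liftQ c cz t) := by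
  simp [fderiv_extendedLagrangian_liftExt_apply c m cz t hL hψ, pQdot]

theorem fderiv_extendedLagrangian_liftExt_z (hL : Differentiable ℝ L)
    (hψ : ∀ α, Differentiable ℝ (ψ α)) :
    fderiv ℝ (extendedLagrangian L ψ) (liftExt c m cz t) ((0, 0), (0, 0), 1)
      = pZ (fun p => L p - ∑ α, m t α * ψ α p) (liftQ c cz t) := by
  simp [fderiv_extendedLagrangian_liftExt_apply c m cz t hL hψ, pZ]

theorem fderiv_extendedLagrangian_liftExt_multiplier (hL : Differentiable ℝ L)
    (hψ : ∀ α, Differentiable ℝ (ψ α)) (α : Fin k) :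
    fderiv ℝ (extendedLagrangian L ψ) (liftExt c m cz t) ((0, Pi.single α 1), (0, 0), 0)
      = -ψ α (liftQ c cz t) := by
  simp [fderiv_extendedLagrangian_liftExt_apply c m cz t hL hψ, Pi.single_apply,
    Prod.mk_zero_zero]

theorem fderiv_extendedLagrangian_liftExt_multiplier_dot (hL : Differentiable ℝ L)
    (hψ : ∀ α, Differentiable ℝ (ψ α)) (α : Fin k) :
    fderiv ℝ (extendedLagrangian L ψ) (liftExt c m cz t) ((0, 0), (0, Pi.single α 1), 0)
      = 0 := by
  simp [fderiv_extendedLagrangian_liftExt_apply c m cz t hL hψ, Prod.mk_zero_zero]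

end ExtendedLagrangian

theorem extended_lagrangian_herglotz_iff_general {n k : ℕ}
    (L : (Fin n → ℝ) × (Fin n → ℝ) × ℝ → ℝ) (hL : ContDiff ℝ 2 L)
    (ψ : Fin k → (Fin n → ℝ) × (Fin n → ℝ) × ℝ → ℝ) (hψ : ∀ α, ContDiff ℝ 2 (ψ α))
    (ExtL : ((Fin n → ℝ) × (Fin k → ℝ)) × ((Fin n → ℝ) × (Fin k → ℝ)) × ℝ → ℝ)
    (hExtL : ExtL = fun p =>
      L (p.1.1, p.2.1.1, p.2.2) - ∑ α, p.1.2 α * ψ α (p.1.1, p.2.1.1, p.2.2))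
    (c : ℝ → Fin n → ℝ) (m : ℝ → Fin k → ℝ) (cz : ℝ → ℝ)
    (hode : ∀ t ∈ Icc (0:ℝ) 1,
      HasDerivWithinAt cz (ExtL (liftExt c m cz t)) (Icc 0 1) t) :
    -- Herglotz equations for 𝓛 in all n + k configuration variables ...
    ((∀ i : Fin n, ∀ t ∈ Icc (0:ℝ) 1,
        HasDerivWithinAt
          (fun τ => fderiv ℝ ExtL (liftExt c m cz τ) ((0, 0), (Pi.single i 1, 0), 0))
          (fderiv ℝ ExtL (liftExt c m cz t) ((Pi.single i 1, 0), (0, 0), 0) +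
            fderiv ℝ ExtL (liftExt c m cz t) ((0, 0), (Pi.single i 1, 0), 0) *
              fderiv ℝ ExtL (liftExt c m cz t) ((0, 0), (0, 0), 1))
          (Icc 0 1) t) ∧
     (∀ α : Fin k, ∀ t ∈ Icc (0:ℝ) 1,
        HasDerivWithinAt
          (fun τ => fderiv ℝ ExtL (liftExt c m cz τ) ((0, 0), (0, Pi.single α 1), 0))
          (fderiv ℝ ExtL (liftExt c m cz t) ((0, Pi.single α 1), (0, 0), 0) +
            fderiv ℝ ExtL (liftExt c m cz t) ((0, 0), (0, Pi.single α 1), 0) *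
              fderiv ℝ ExtL (liftExt c m cz t) ((0, 0), (0, 0), 1))
          (Icc 0 1) t))
    ↔
    -- ... iff (i) the constraints hold, (ii) c_z' = L, and (iii) the Herglotz
    -- equations for the time-dependent Lagrangian 𝓛_m hold
    ((∀ α : Fin k, ∀ t ∈ Icc (0:ℝ) 1, ψ α (liftQ c cz t) = 0) ∧
     (∀ t ∈ Icc (0:ℝ) 1,
        HasDerivWithinAt cz (L (liftQ c cz t)) (Icc 0 1) t) ∧
     (∀ i : Fin n, ∀ t ∈ Icc (0:ℝ) 1,
        HasDerivWithinAt
          (fun τ => pQdot i (fun p => L p - ∑ α, m τ α * ψ α p) (liftQ c cz τ))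
          (pQ i (fun p => L p - ∑ α, m t α * ψ α p) (liftQ c cz t) +
            pQdot i (fun p => L p - ∑ α, m t α * ψ α p) (liftQ c cz t) *
              pZ (fun p => L p - ∑ α, m t α * ψ α p) (liftQ c cz t))
          (Icc 0 1) t)) := by
  obtain rfl : ExtL = extendedLagrangian L ψ := hExtL
  have hL' := hL.differentiable two_ne_zero
  have hψ' := fun α => (hψ α).differentiable two_ne_zero
  have hunique : ∀ t ∈ Icc (0:ℝ) 1, UniqueDiffWithinAt ℝ (Icc 0 1) t :=
    uniqueDiffOn_Icc zero_lt_one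
  simp only [fderiv_extendedLagrangian_liftExt_q c m cz _ hL' hψ',
    fderiv_extendedLagrangian_liftExt_qdot c m cz _ hL' hψ',
    fderiv_extendedLagrangian_liftExt_z c m cz _ hL' hψ',
    fderiv_extendedLagrangian_liftExt_multiplier c m cz _ hL' hψ',
    fderiv_extendedLagrangian_liftExt_multiplier_dot c m cz _ hL' hψ', zero_mul, add_zero]
  constructor
  · rintro ⟨hherglotz, hmultiplier⟩
    have hcon : ∀ α, ∀ t ∈ Icc (0:ℝ) 1, ψ α (liftQ c cz t) = 0 := fun α t ht =>
      neg_eq_zero.1 <| (hasDerivWithinAt_const_iff (hunique t ht)).1 (hmultiplier α t ht)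
    refine ⟨hcon, fun t ht => ?_, hherglotz⟩
    simpa [extendedLagrangian_liftExt, hcon _ t ht] using hode t ht
  · rintro ⟨hcon, -, hherglotz⟩
    exact ⟨hherglotz, fun α t ht =>
      (hasDerivWithinAt_const_iff (hunique t ht)).2 (by rw [hcon α t ht, neg_zero])⟩

/-- Vakonomic contact dynamics via an extended Lagrangian: a curve `(c, m)` with action
`c_z` satisfying `c_z' = 𝓛(c, m, c', m', c_z)` satisfies the Herglotz equations of the
extended contact Lagrangian `𝓛(q, μ, q̇, μ̇, z) = L(q, q̇, z) - Σ_α μ_α ψᵅ(q, q̇, z)` in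
all `n + k` configuration variables if and only if (i) the constraints `ψᵅ = 0` hold,
(ii) `c_z' = L(c, c', c_z)`, and (iii) the Herglotz equations for the time-dependent
Lagrangian `𝓛_m = L - m_α(t) ψᵅ` hold in the variables `q`. -/
theorem extended_lagrangian_herglotz_iff {n k : ℕ}
    (L : (Fin n → ℝ) × (Fin n → ℝ) × ℝ → ℝ) (hL : ContDiff ℝ 2 L)
    (ψ : Fin k → (Fin n → ℝ) × (Fin n → ℝ) × ℝ → ℝ) (hψ : ∀ α, ContDiff ℝ 2 (ψ α))
    (ExtL : ((Fin n → ℝ) × (Fin k → ℝ)) × ((Fin n → ℝ) × (Fin k → ℝ)) × ℝ → ℝ)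
    (hExtL : ExtL = fun p =>
      L (p.1.1, p.2.1.1, p.2.2) - ∑ α, p.1.2 α * ψ α (p.1.1, p.2.1.1, p.2.2))
    (c : ℝ → Fin n → ℝ) (m : ℝ → Fin k → ℝ) (cz : ℝ → ℝ)
    (hreg : ContDiffOn ℝ 2 (fun t => (c t, m t)) (Icc 0 1))
    (hcz : ContDiffOn ℝ 1 cz (Icc 0 1))
    (hode : ∀ t ∈ Icc (0:ℝ) 1,
      HasDerivWithinAt cz (ExtL (liftExt c m cz t)) (Icc 0 1) t) :
    -- Herglotz equations for 𝓛 in all n + k configuration variables ...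
    ((∀ i : Fin n, ∀ t ∈ Icc (0:ℝ) 1,
        HasDerivWithinAt
          (fun τ => fderiv ℝ ExtL (liftExt c m cz τ) ((0, 0), (Pi.single i 1, 0), 0))
          (fderiv ℝ ExtL (liftExt c m cz t) ((Pi.single i 1, 0), (0, 0), 0) +
            fderiv ℝ ExtL (liftExt c m cz t) ((0, 0), (Pi.single i 1, 0), 0) *
              fderiv ℝ ExtL (liftExt c m cz t) ((0, 0), (0, 0), 1))
          (Icc 0 1) t) ∧
     (∀ α : Fin k, ∀ t ∈ Icc (0:ℝ) 1,
        HasDerivWithinAt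
          (fun τ => fderiv ℝ ExtL (liftExt c m cz τ) ((0, 0), (0, Pi.single α 1), 0))
          (fderiv ℝ ExtL (liftExt c m cz t) ((0, Pi.single α 1), (0, 0), 0) +
            fderiv ℝ ExtL (liftExt c m cz t) ((0, 0), (0, Pi.single α 1), 0) *
              fderiv ℝ ExtL (liftExt c m cz t) ((0, 0), (0, 0), 1))
          (Icc 0 1) t))
    ↔
    -- ... iff (i) the constraints hold, (ii) c_z' = L, and (iii) the Herglotz
    -- equations for the time-dependent Lagrangian 𝓛_m hold
    ((∀ α : Fin k, ∀ t ∈ Icc (0:ℝ) 1, ψ α (liftQ c cz t) = 0) ∧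
     (∀ t ∈ Icc (0:ℝ) 1,
        HasDerivWithinAt cz (L (liftQ c cz t)) (Icc 0 1) t) ∧
     (∀ i : Fin n, ∀ t ∈ Icc (0:ℝ) 1,
        HasDerivWithinAt
          (fun τ => pQdot i (fun p => L p - ∑ α, m τ α * ψ α p) (liftQ c cz τ))
          (pQ i (fun p => L p - ∑ α, m t α * ψ α p) (liftQ c cz t) +
            pQdot i (fun p => L p - ∑ α, m t α * ψ α p) (liftQ c cz t) *
              pZ (fun p => L p - ∑ α, m t α * ψ α p) (liftQ c cz t))
          (Icc 0 1) t)) :=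
  extended_lagrangian_herglotz_iff_general L hL ψ hψ ExtL hExtL c m cz hode
end

section
/- Let X : ℝⁿ × ℝᵐ × ℝ → ℝⁿ and F : ℝⁿ × ℝᵐ × ℝ → ℝ be C² functions of (x, u, z), and define the extended contact Lagrangian 𝓛(x, u, μ, ẋ, u̇, μ̇, z) = F(x, u, z) − Σ_j μ_j (Xʲ(x, u, z) − ẋʲ) on T(ℝⁿ × ℝᵐ × ℝⁿ) × ℝ. Let (x, u, μ) : [0,1] → ℝⁿ × ℝᵐ × ℝⁿ be C² and z : [0,1] → ℝ be C¹ with z'(t) = 𝓛 evaluated along the lifted curve. Then (x, u, μ, z) satisfies the Herglotz equations for 𝓛 in all configuration variables (x, u, μ) if and only if, along (x(t), u(t), z(t)): (i) ẋⁱ(t) = Xⁱ for each i; (ii) μ̇_i(t) = μ_i ∂F/∂z − Σ_j μ_j ∂Xʲ/∂xⁱ + ∂F/∂xⁱ − Σ_j μ_i μ_j ∂Xʲ/∂z for each i; (iii) ∂F/∂uᵃ − Σ_j μ_j ∂Xʲ/∂uᵃ = 0 for each a = 1,…,m; and (iv) ż(t) = F(x(t), u(t), z(t)). These are the equations of motion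 of the Herglotz optimal control problem with control equations ẋ = X(x, u, z) and cost function defined by ż = F(x, u, z), as obtained via Pontryagin's maximum principle. -/
/-!
Along a lifted curve the partial derivatives of `𝓛` are explicit: `∂𝓛/∂ẋⁱ = μᵢ`,
`∂𝓛/∂u̇ = ∂𝓛/∂μ̇ = 0`, `∂𝓛/∂μᵢ = ẋⁱ - Xⁱ`, `∂𝓛/∂uᵃ = ∂F/∂uᵃ - μⱼ ∂Xʲ/∂uᵃ` and
`∂𝓛/∂z = ∂F/∂z - μⱼ ∂Xʲ/∂z`. As `𝓛` does not depend on `u̇` and `μ̇`, the Herglotz equations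
in `u` and `μ` are the algebraic equations `∂𝓛/∂u = 0` and `∂𝓛/∂μ = 0`, that is (iii) and (i),
while the equation in `x` is the costate equation (ii). Once `ẋ = X` the constraint term of `𝓛`
vanishes, so `ż = 𝓛` becomes (iv).
-/

open Set

/-- The lifted curve of the configuration curve `(x, u, μ)` with action `z` in
`T(ℝⁿ × ℝᵐ × ℝⁿ) × ℝ`, the phase space of the extended contact Lagrangian of the
Herglotz optimal control problem. -/
noncomputable def liftCtrl {n m : ℕ} (x : ℝ → Fin n → ℝ) (u : ℝ → Fin m → ℝ)
    (mu : ℝ → Fin n → ℝ) (z : ℝ → ℝ) (t : ℝ) :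
    ((Fin n → ℝ) × (Fin m → ℝ) × (Fin n → ℝ)) ×
      ((Fin n → ℝ) × (Fin m → ℝ) × (Fin n → ℝ)) × ℝ :=
  ((x t, u t, mu t),
   (derivWithin x (Icc 0 1) t, derivWithin u (Icc 0 1) t, derivWithin mu (Icc 0 1) t),
   z t)

theorem DifferentiableWithinAt.hasDerivWithinAt_apply_iff {𝕜 ι : Type*}
    [NontriviallyNormedField 𝕜] [Fintype ι] {E : ι → Type*}
    [∀ i, NormedAddCommGroup (E i)] [∀ i, NormedSpace 𝕜 (E i)] {φ : 𝕜 → ∀ i, E i}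
    {s : Set 𝕜} {t : 𝕜} (hφ : DifferentiableWithinAt 𝕜 φ s t)
    (hs : UniqueDiffWithinAt 𝕜 s t) (i : ι) (c : E i) :
    HasDerivWithinAt (fun τ => φ τ i) c s t ↔ derivWithin φ s t i = c :=
  have hφi := hasDerivWithinAt_pi.mp hφ.hasDerivWithinAt i
  ⟨hs.eq_deriv s hφi, fun h => h ▸ hφi⟩

section Herglotz

variable {Q : Type*} [NormedAddCommGroup Q] [NormedSpace ℝ Q]

/-- The Herglotz equation `d/dt (∂L/∂q̇ · v) - ∂L/∂q · v = (∂L/∂q̇ · v) (∂L/∂z)` of a contact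
Lagrangian `L(q, q̇, z)` in the direction `v`, along a lifted curve `γ = (q, q̇, z)`. -/
def HerglotzEq (L : Q × Q × ℝ → ℝ) (γ : ℝ → Q × Q × ℝ) (s : Set ℝ) (v : Q) (t : ℝ) : Prop :=
  HasDerivWithinAt (fun τ => fderiv ℝ L (γ τ) (0, v, 0))
    (fderiv ℝ L (γ t) (v, 0, 0) + fderiv ℝ L (γ t) (0, v, 0) * fderiv ℝ L (γ t) (0, 0, 1)) s t

theorem herglotzEq_iff_of_fderiv_velocity_eq_zero {L : Q × Q × ℝ → ℝ} {γ : ℝ → Q × Q × ℝ}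
    {s : Set ℝ} {v : Q} {t : ℝ} (hs : UniqueDiffWithinAt ℝ s t)
    (hv : ∀ τ, fderiv ℝ L (γ τ) (0, v, 0) = 0) :
    HerglotzEq L γ s v t ↔ fderiv ℝ L (γ t) (v, 0, 0) = 0 := by
  rw [HerglotzEq, funext hv, hv t, zero_mul, add_zero]
  exact ⟨fun h => (hs.eq_deriv s (hasDerivWithinAt_const t s 0) h).symm,
    fun h => by rw [h]; exact hasDerivWithinAt_const t s 0⟩

end Herglotz

section ControlLagrangian

variable {n m : ℕ}

abbrev ControlState (n m : ℕ) := (Fin n → ℝ) × (Fin m → ℝ) × ℝ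

abbrev ControlConfig (n m : ℕ) := (Fin n → ℝ) × (Fin m → ℝ) × (Fin n → ℝ)

abbrev ControlPhase (n m : ℕ) := ControlConfig n m × ControlConfig n m × ℝ

noncomputable def stateProj : ControlPhase n m →L[ℝ] ControlState n m :=
  ((ContinuousLinearMap.fst ℝ _ _).comp (ContinuousLinearMap.fst ℝ _ _)).prod
    (((ContinuousLinearMap.fst ℝ _ _).comp
        ((ContinuousLinearMap.snd ℝ _ _).comp (ContinuousLinearMap.fst ℝ _ _))).prod
      ((ContinuousLinearMap.snd ℝ _ _).comp (ContinuousLinearMap.snd ℝ _ _)))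

@[simp]
theorem stateProj_apply (p : ControlPhase n m) : stateProj p = (p.1.1, p.1.2.1, p.2.2) := rfl

/-- `𝓛(x, u, μ, ẋ, u̇, μ̇, z) = F(x, u, z) - Σⱼ μⱼ (Xʲ(x, u, z) - ẋʲ)`. -/
noncomputable def controlLagrangian (X : ControlState n m → Fin n → ℝ)
    (F : ControlState n m → ℝ) (p : ControlPhase n m) : ℝ :=
  F (stateProj p) - ∑ j, p.1.2.2 j * (X (stateProj p) j - p.2.1.1 j)

variable {X : ControlState n m → Fin n → ℝ} {F : ControlState n m → ℝ}

theorem fderiv_controlLagrangian_apply {p : ControlPhase n m}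
    (hX : DifferentiableAt ℝ X (stateProj p)) (hF : DifferentiableAt ℝ F (stateProj p))
    (w : ControlPhase n m) :
    fderiv ℝ (controlLagrangian X F) p w =
      fderiv ℝ F (stateProj p) (stateProj w) -
        ∑ j, (p.1.2.2 j * (fderiv ℝ (fun q => X q j) (stateProj p) (stateProj w) - w.2.1.1 j) +
          (X (stateProj p) j - p.2.1.1 j) * w.1.2.2 j) := by
  have hcostate (j : Fin n) := (hasFDerivAt_apply (𝕜 := ℝ) j p.1.2.2).comp p
    (hasFDerivAt_snd.comp p (hasFDerivAt_snd.comp p hasFDerivAt_fst))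
  have hvelocity (j : Fin n) := (hasFDerivAt_apply (𝕜 := ℝ) j p.2.1.1).comp p
    (hasFDerivAt_fst.comp p (hasFDerivAt_fst.comp p hasFDerivAt_snd))
  have hXj (j : Fin n) :=
    (differentiableAt_pi.mp hX j).hasFDerivAt.comp p stateProj.hasFDerivAt
  have hL : HasFDerivAt (controlLagrangian X F) _ p :=
    (hF.hasFDerivAt.comp p stateProj.hasFDerivAt).sub <| HasFDerivAt.fun_sum (u := Finset.univ)
      fun j _ => (hcostate j).mul ((hXj j).sub (hvelocity j))
  rw [hL.fderiv]
  simp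

theorem controlLagrangian_eq_of_velocity_eq {p : ControlPhase n m}
    (hp : p.2.1.1 = X (stateProj p)) : controlLagrangian X F p = F (stateProj p) := by
  simp [controlLagrangian, hp]

variable (x : ℝ → Fin n → ℝ) (u : ℝ → Fin m → ℝ) (mu : ℝ → Fin n → ℝ) (z : ℝ → ℝ)

theorem herglotzEq_controlLagrangian_state_iff (hX : Differentiable ℝ X)
    (hF : Differentiable ℝ F) (i : Fin n) (t : ℝ) :
    HerglotzEq (controlLagrangian X F) (liftCtrl x u mu z) (Icc 0 1) (Pi.single i 1, 0, 0) t ↔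
      HasDerivWithinAt (fun τ => mu τ i)
        (mu t i * fderiv ℝ F (x t, u t, z t) (0, 0, 1) -
          (∑ j, mu t j * fderiv ℝ (fun p => X p j) (x t, u t, z t) (Pi.single i 1, 0, 0)) +
          fderiv ℝ F (x t, u t, z t) (Pi.single i 1, 0, 0) -
          ∑ j, mu t i * mu t j * fderiv ℝ (fun p => X p j) (x t, u t, z t) (0, 0, 1))
        (Icc 0 1) t := by
  have hvelocity (τ : ℝ) : fderiv ℝ (controlLagrangian X F) (liftCtrl x u mu z τ)
      (0, (Pi.single i 1, 0, 0), 0) = mu τ i := by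
    simp [fderiv_controlLagrangian_apply (hX _) (hF _), liftCtrl, Prod.mk_zero_zero,
      Pi.single_apply]
  rw [HerglotzEq, funext hvelocity, hvelocity]
  refine iff_of_eq (congrArg (HasDerivWithinAt _ · _ _) ?_)
  simp only [fderiv_controlLagrangian_apply (hX _) (hF _), liftCtrl, stateProj_apply,
    Prod.fst_zero, Prod.snd_zero, Pi.zero_apply, sub_zero, mul_zero, add_zero]
  rw [mul_sub, Finset.mul_sum]
  simp only [mul_assoc]
  ring

theorem herglotzEq_controlLagrangian_control_iff (hX : Differentiable ℝ X)
    (hF : Differentiable ℝ F) (a : Fin m) {t : ℝ} (ht : t ∈ Icc (0 : ℝ) 1) :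
    HerglotzEq (controlLagrangian X F) (liftCtrl x u mu z) (Icc 0 1) (0, Pi.single a 1, 0) t ↔
      fderiv ℝ F (x t, u t, z t) (0, Pi.single a 1, 0) -
        ∑ j, mu t j * fderiv ℝ (fun p => X p j) (x t, u t, z t) (0, Pi.single a 1, 0) = 0 := by
  rw [herglotzEq_iff_of_fderiv_velocity_eq_zero (uniqueDiffOn_Icc one_pos t ht)
    fun τ => by simp [fderiv_controlLagrangian_apply (hX _) (hF _), Prod.mk_zero_zero]]
  simp [fderiv_controlLagrangian_apply (hX _) (hF _), liftCtrl]

theorem herglotzEq_controlLagrangian_costate_iff (hX : Differentiable ℝ X)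
    (hF : Differentiable ℝ F) (i : Fin n) {t : ℝ} (ht : t ∈ Icc (0 : ℝ) 1)
    (hx : DifferentiableWithinAt ℝ x (Icc 0 1) t) :
    HerglotzEq (controlLagrangian X F) (liftCtrl x u mu z) (Icc 0 1) (0, 0, Pi.single i 1) t ↔
      HasDerivWithinAt (fun τ => x τ i) (X (x t, u t, z t) i) (Icc 0 1) t := by
  rw [herglotzEq_iff_of_fderiv_velocity_eq_zero (uniqueDiffOn_Icc one_pos t ht)
      fun τ => by simp [fderiv_controlLagrangian_apply (hX _) (hF _), Prod.mk_zero_zero],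
    hx.hasDerivWithinAt_apply_iff (uniqueDiffOn_Icc one_pos t ht)]
  simp [fderiv_controlLagrangian_apply (hX _) (hF _), liftCtrl, Prod.mk_zero_zero,
    Pi.single_apply, sub_eq_zero]

theorem controlLagrangian_liftCtrl_of_hasDerivWithinAt {t : ℝ} (ht : t ∈ Icc (0 : ℝ) 1)
    (hx : ∀ i, HasDerivWithinAt (fun τ => x τ i) (X (x t, u t, z t) i) (Icc 0 1) t) :
    controlLagrangian X F (liftCtrl x u mu z t) = F (x t, u t, z t) :=
  controlLagrangian_eq_of_velocity_eq
    ((hasDerivWithinAt_pi.mpr hx).derivWithin (uniqueDiffOn_Icc one_pos t ht))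

end ControlLagrangian

theorem herglotz_optimal_control_iff_general {n m : ℕ}
    (X : (Fin n → ℝ) × (Fin m → ℝ) × ℝ → Fin n → ℝ) (hX : ContDiff ℝ 2 X)
    (F : (Fin n → ℝ) × (Fin m → ℝ) × ℝ → ℝ) (hF : ContDiff ℝ 2 F)
    (ExtL : ((Fin n → ℝ) × (Fin m → ℝ) × (Fin n → ℝ)) ×
      ((Fin n → ℝ) × (Fin m → ℝ) × (Fin n → ℝ)) × ℝ → ℝ)
    (hExtL : ExtL = fun p =>
      F (p.1.1, p.1.2.1, p.2.2) -
        ∑ j, p.1.2.2 j * (X (p.1.1, p.1.2.1, p.2.2) j - p.2.1.1 j))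
    (x : ℝ → Fin n → ℝ) (u : ℝ → Fin m → ℝ) (mu : ℝ → Fin n → ℝ) (z : ℝ → ℝ)
    (hreg : ContDiffOn ℝ 2 (fun t => (x t, u t, mu t)) (Icc 0 1))
    (hode : ∀ t ∈ Icc (0:ℝ) 1,
      HasDerivWithinAt z (ExtL (liftCtrl x u mu z t)) (Icc 0 1) t) :
    -- Herglotz equations for 𝓛 in all configuration variables (x, u, μ) ...
    ((∀ i : Fin n, ∀ t ∈ Icc (0:ℝ) 1,
        HasDerivWithinAt
          (fun τ => fderiv ℝ ExtL (liftCtrl x u mu z τ)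
            ((0, 0, 0), (Pi.single i 1, 0, 0), 0))
          (fderiv ℝ ExtL (liftCtrl x u mu z t) ((Pi.single i 1, 0, 0), (0, 0, 0), 0) +
            fderiv ℝ ExtL (liftCtrl x u mu z t) ((0, 0, 0), (Pi.single i 1, 0, 0), 0) *
              fderiv ℝ ExtL (liftCtrl x u mu z t) ((0, 0, 0), (0, 0, 0), 1))
          (Icc 0 1) t) ∧
     (∀ a : Fin m, ∀ t ∈ Icc (0:ℝ) 1,
        HasDerivWithinAt
          (fun τ => fderiv ℝ ExtL (liftCtrl x u mu z τ)
            ((0, 0, 0), (0, Pi.single a 1, 0), 0))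
          (fderiv ℝ ExtL (liftCtrl x u mu z t) ((0, Pi.single a 1, 0), (0, 0, 0), 0) +
            fderiv ℝ ExtL (liftCtrl x u mu z t) ((0, 0, 0), (0, Pi.single a 1, 0), 0) *
              fderiv ℝ ExtL (liftCtrl x u mu z t) ((0, 0, 0), (0, 0, 0), 1))
          (Icc 0 1) t) ∧
     (∀ i : Fin n, ∀ t ∈ Icc (0:ℝ) 1,
        HasDerivWithinAt
          (fun τ => fderiv ℝ ExtL (liftCtrl x u mu z τ)
            ((0, 0, 0), (0, 0, Pi.single i 1), 0))
          (fderiv ℝ ExtL (liftCtrl x u mu z t) ((0, 0, Pi.single i 1), (0, 0, 0), 0) +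
            fderiv ℝ ExtL (liftCtrl x u mu z t) ((0, 0, 0), (0, 0, Pi.single i 1), 0) *
              fderiv ℝ ExtL (liftCtrl x u mu z t) ((0, 0, 0), (0, 0, 0), 1))
          (Icc 0 1) t))
    ↔
    -- ... iff the equations of motion of the Herglotz optimal control problem hold
    ((∀ i : Fin n, ∀ t ∈ Icc (0:ℝ) 1,
        HasDerivWithinAt (fun τ => x τ i) (X (x t, u t, z t) i) (Icc 0 1) t) ∧
     (∀ i : Fin n, ∀ t ∈ Icc (0:ℝ) 1,
        HasDerivWithinAt (fun τ => mu τ i)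
          (mu t i * fderiv ℝ F (x t, u t, z t) (0, 0, 1) -
            (∑ j, mu t j *
              fderiv ℝ (fun p => X p j) (x t, u t, z t) (Pi.single i 1, 0, 0)) +
            fderiv ℝ F (x t, u t, z t) (Pi.single i 1, 0, 0) -
            ∑ j, mu t i * mu t j * fderiv ℝ (fun p => X p j) (x t, u t, z t) (0, 0, 1))
          (Icc 0 1) t) ∧
     (∀ a : Fin m, ∀ t ∈ Icc (0:ℝ) 1,
        fderiv ℝ F (x t, u t, z t) (0, Pi.single a 1, 0) -
          (∑ j, mu t j *
            fderiv ℝ (fun p => X p j) (x t, u t, z t) (0, Pi.single a 1, 0)) = 0) ∧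
     (∀ t ∈ Icc (0:ℝ) 1,
        HasDerivWithinAt z (F (x t, u t, z t)) (Icc 0 1) t)) := by
  obtain rfl : ExtL = controlLagrangian X F := hExtL
  have hXd : Differentiable ℝ X := hX.differentiable two_ne_zero
  have hFd : Differentiable ℝ F := hF.differentiable two_ne_zero
  have hx : ∀ t ∈ Icc (0 : ℝ) 1, DifferentiableWithinAt ℝ x (Icc 0 1) t := fun t ht =>
    ((hreg.differentiableOn two_ne_zero) t ht).fst
  refine (and_congr
    (forall_congr' fun i => forall₂_congr fun t (_ : t ∈ Icc (0 : ℝ) 1) =>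
      herglotzEq_controlLagrangian_state_iff x u mu z hXd hFd i t)
    (and_congr
      (forall_congr' fun a => forall₂_congr fun t (ht : t ∈ Icc (0 : ℝ) 1) =>
        herglotzEq_controlLagrangian_control_iff x u mu z hXd hFd a ht)
      (forall_congr' fun i => forall₂_congr fun t (ht : t ∈ Icc (0 : ℝ) 1) =>
        herglotzEq_controlLagrangian_costate_iff x u mu z hXd hFd i ht (hx t ht)))).trans
    ⟨fun ⟨hcostate, hcontrol, hvelocity⟩ => ⟨hvelocity, hcostate, hcontrol, fun t ht => ?_⟩,
      fun ⟨hvelocity, hcostate, hcontrol, _⟩ => ⟨hcostate, hcontrol, hvelocity⟩⟩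
  rw [← controlLagrangian_liftCtrl_of_hasDerivWithinAt (F := F) x u mu z ht
    fun i => hvelocity i t ht]
  exact hode t ht

/-- The Herglotz optimal control problem as a vakonomic contact system: a curve
`(x, u, μ)` with action `z` satisfying `ż = 𝓛` along the lifted curve, where
`𝓛(x, u, μ, ẋ, u̇, μ̇, z) = F(x, u, z) - Σ_j μ_j (Xʲ(x, u, z) - ẋʲ)`, satisfies the
Herglotz equations of `𝓛` in all configuration variables `(x, u, μ)` if and only if
(i) `ẋ = X`, (ii) the costate equations for `μ` hold, (iii) `∂F/∂uᵃ - μ_j ∂Xʲ/∂uᵃ = 0`,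
and (iv) `ż = F` — the equations of motion of the Herglotz optimal control problem
obtained via Pontryagin's maximum principle. -/
theorem herglotz_optimal_control_iff {n m : ℕ}
    (X : (Fin n → ℝ) × (Fin m → ℝ) × ℝ → Fin n → ℝ) (hX : ContDiff ℝ 2 X)
    (F : (Fin n → ℝ) × (Fin m → ℝ) × ℝ → ℝ) (hF : ContDiff ℝ 2 F)
    (ExtL : ((Fin n → ℝ) × (Fin m → ℝ) × (Fin n → ℝ)) ×
      ((Fin n → ℝ) × (Fin m → ℝ) × (Fin n → ℝ)) × ℝ → ℝ)
    (hExtL : ExtL = fun p =>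
      F (p.1.1, p.1.2.1, p.2.2) -
        ∑ j, p.1.2.2 j * (X (p.1.1, p.1.2.1, p.2.2) j - p.2.1.1 j))
    (x : ℝ → Fin n → ℝ) (u : ℝ → Fin m → ℝ) (mu : ℝ → Fin n → ℝ) (z : ℝ → ℝ)
    (hreg : ContDiffOn ℝ 2 (fun t => (x t, u t, mu t)) (Icc 0 1))
    (hz : ContDiffOn ℝ 1 z (Icc 0 1))
    (hode : ∀ t ∈ Icc (0:ℝ) 1,
      HasDerivWithinAt z (ExtL (liftCtrl x u mu z t)) (Icc 0 1) t) :
    -- Herglotz equations for 𝓛 in all configuration variables (x, u, μ) ...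
    ((∀ i : Fin n, ∀ t ∈ Icc (0:ℝ) 1,
        HasDerivWithinAt
          (fun τ => fderiv ℝ ExtL (liftCtrl x u mu z τ)
            ((0, 0, 0), (Pi.single i 1, 0, 0), 0))
          (fderiv ℝ ExtL (liftCtrl x u mu z t) ((Pi.single i 1, 0, 0), (0, 0, 0), 0) +
            fderiv ℝ ExtL (liftCtrl x u mu z t) ((0, 0, 0), (Pi.single i 1, 0, 0), 0) *
              fderiv ℝ ExtL (liftCtrl x u mu z t) ((0, 0, 0), (0, 0, 0), 1))
          (Icc 0 1) t) ∧
     (∀ a : Fin m, ∀ t ∈ Icc (0:ℝ) 1,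
        HasDerivWithinAt
          (fun τ => fderiv ℝ ExtL (liftCtrl x u mu z τ)
            ((0, 0, 0), (0, Pi.single a 1, 0), 0))
          (fderiv ℝ ExtL (liftCtrl x u mu z t) ((0, Pi.single a 1, 0), (0, 0, 0), 0) +
            fderiv ℝ ExtL (liftCtrl x u mu z t) ((0, 0, 0), (0, Pi.single a 1, 0), 0) *
              fderiv ℝ ExtL (liftCtrl x u mu z t) ((0, 0, 0), (0, 0, 0), 1))
          (Icc 0 1) t) ∧
     (∀ i : Fin n, ∀ t ∈ Icc (0:ℝ) 1,
        HasDerivWithinAt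
          (fun τ => fderiv ℝ ExtL (liftCtrl x u mu z τ)
            ((0, 0, 0), (0, 0, Pi.single i 1), 0))
          (fderiv ℝ ExtL (liftCtrl x u mu z t) ((0, 0, Pi.single i 1), (0, 0, 0), 0) +
            fderiv ℝ ExtL (liftCtrl x u mu z t) ((0, 0, 0), (0, 0, Pi.single i 1), 0) *
              fderiv ℝ ExtL (liftCtrl x u mu z t) ((0, 0, 0), (0, 0, 0), 1))
          (Icc 0 1) t))
    ↔
    -- ... iff the equations of motion of the Herglotz optimal control problem hold
    ((∀ i : Fin n, ∀ t ∈ Icc (0:ℝ) 1,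
        HasDerivWithinAt (fun τ => x τ i) (X (x t, u t, z t) i) (Icc 0 1) t) ∧
     (∀ i : Fin n, ∀ t ∈ Icc (0:ℝ) 1,
        HasDerivWithinAt (fun τ => mu τ i)
          (mu t i * fderiv ℝ F (x t, u t, z t) (0, 0, 1) -
            (∑ j, mu t j *
              fderiv ℝ (fun p => X p j) (x t, u t, z t) (Pi.single i 1, 0, 0)) +
            fderiv ℝ F (x t, u t, z t) (Pi.single i 1, 0, 0) -
            ∑ j, mu t i * mu t j * fderiv ℝ (fun p => X p j) (x t, u t, z t) (0, 0, 1))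
          (Icc 0 1) t) ∧
     (∀ a : Fin m, ∀ t ∈ Icc (0:ℝ) 1,
        fderiv ℝ F (x t, u t, z t) (0, Pi.single a 1, 0) -
          (∑ j, mu t j *
            fderiv ℝ (fun p => X p j) (x t, u t, z t) (0, Pi.single a 1, 0)) = 0) ∧
     (∀ t ∈ Icc (0:ℝ) 1,
        HasDerivWithinAt z (F (x t, u t, z t)) (Icc 0 1) t)) :=
  herglotz_optimal_control_iff_general X hX F hF ExtL hExtL x u mu z hreg hode
end
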